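/- Every subgraph G of the complete bipartite graph K_{7,30} contains a copy of K_{2,2}, or the bipartite complement of G contains a copy of K_{5,5}. (Hence BR_7(K_{2,2}, K_{5,5}) ≤ 30.) -/

import Mathlib

/-- A subgraph of the complete bipartite graph `K_{m,n}` is identified with its
edge set, a finset of pairs `(x, y)` with `x` in the part `X = Fin m` and
`y` in the part `Y = Fin n`.  `bContains s t E` says that the bipartite graph
with edge set `E` contains a copy of `K_{s,t}`: there are `s` distinct
vertices of `X` and `t` distinct vertices of `Y` with all pairs present. -/
def bContains {m n : ℕ} (s t : ℕ) (E : Finset (Fin m × Fin n)) : Prop :=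
  ∃ (A : Finset (Fin m)) (B : Finset (Fin n)),
    A.card = s ∧ B.card = t ∧ ∀ x ∈ A, ∀ y ∈ B, (x, y) ∈ E

/-- The bipartite complement: edge set `(X × Y) \ E`. -/
def bCompl {m n : ℕ} (E : Finset (Fin m × Fin n)) : Finset (Fin m × Fin n) :=
  Finset.univ \ E

/-- The neighborhood `N_G(x) ⊆ Y` of a vertex `x ∈ X`. -/
def bNbhd {m n : ℕ} (E : Finset (Fin m × Fin n)) (x : Fin m) : Finset (Fin n) :=
  Finset.univ.filter (fun y => (x, y) ∈ E)

/-- The degree of a vertex `x ∈ X`. -/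
def bDeg {m n : ℕ} (E : Finset (Fin m × Fin n)) (x : Fin m) : ℕ :=
  (bNbhd E x).card

/-- `Δ(G_X)`: the maximum degree over the vertices of the part `X`. -/
def bMaxDegX {m n : ℕ} (E : Finset (Fin m × Fin n)) : ℕ :=
  Finset.univ.sup (fun x => bDeg E x)


/-!
Write `S y ⊆ X` for the neighbourhood of `y ∈ Y`. Without a `K_{2,2}`, two vertices of `Y`
share at most one neighbour, so the 2-subsets of the various `S y` are pairwise distinct:
at most `21` of the sets `S y` have two or more elements, and `∑ y, C(#(S y \ {i}), 2) ≤ 15`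
for every `i ∈ X`. Without a `K_{5,5}` in the complement, at most `4` of the sets `S y` lie
in any given pair `P ⊆ X`.
Fix `i ∈ X` and add up the bounds for the six pairs `{i, j}` and the bound `15`: every `y`
contributes at least `1`, and every `y` with `S y ⊆ {i}` contributes `6`, so
`30 + 5 · #{y | S y ⊆ {i}} ≤ 24 + 15`. Hence each `{i}` contains at most one `S y`, at most `7`
of the sets `S y` have at most one element, and `30 ≤ 7 + 21` is absurd.
-/

open Finset

def bNbhdY {m n : ℕ} (E : Finset (Fin m × Fin n)) (y : Fin n) : Finset (Fin m) :=
  univ.filter (fun x => (x, y) ∈ E)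

theorem one_le_card_filter_subset_pair_add_choose_two {α : Type*} [Fintype α] [DecidableEq α]
    {S : Finset α} {i : α} (hS : ¬ S ⊆ {i}) :
    1 ≤ #{j ∈ {i}ᶜ | S ⊆ {i, j}} + (#(S ∩ {i}ᶜ)).choose 2 := by
  rcases le_or_gt 2 #(S ∩ {i}ᶜ) with h2 | h2
  · exact le_add_left (Nat.choose_pos h2)
  obtain ⟨k, hkS, hki⟩ := not_subset.mp hS
  rw [mem_singleton] at hki
  have hk : k ∈ S ∩ {i}ᶜ := by simp [hkS, hki]
  have hSik : S ⊆ {i, k} := fun x hx => by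
    by_cases hxi : x = i
    · simp [hxi]
    · have hx' : x ∈ S ∩ {i}ᶜ := by simp [hx, hxi]
      simp [card_le_one.mp (by omega) x hx' k hk]
  exact le_add_right (card_pos.mpr ⟨k, by simp [hki, hSik]⟩)

section

variable {m n : ℕ} (E : Finset (Fin m × Fin n))

theorem card_bNbhdY_inter_le_one (h : ¬ bContains 2 2 E) {y y' : Fin n} (hne : y ≠ y') :
    #(bNbhdY E y ∩ bNbhdY E y') ≤ 1 := by
  by_contra! hc
  obtain ⟨x, hx, x', hx', hxx'⟩ := one_lt_card.mp hc
  refine h ⟨{x, x'}, {y, y'}, card_pair hxx', card_pair hne, ?_⟩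
  simp only [bNbhdY, mem_inter, mem_filter, mem_univ, true_and] at hx hx'
  simp only [mem_insert, mem_singleton]
  rintro _ (rfl | rfl) _ (rfl | rfl) <;> tauto

theorem sum_choose_two_card_bNbhdY_inter_le (h : ¬ bContains 2 2 E) (A : Finset (Fin m)) :
    ∑ y, (#(bNbhdY E y ∩ A)).choose 2 ≤ (#A).choose 2 := by
  have hdisj : ((univ : Finset (Fin n)) : Set (Fin n)).PairwiseDisjoint
      fun y => (bNbhdY E y ∩ A).powersetCard 2 := by
    intro y _ y' _ hne
    refine disjoint_left.mpr fun T hT hT' => ?_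
    rw [mem_powersetCard] at hT hT'
    have hT_sub : T ⊆ bNbhdY E y ∩ bNbhdY E y' :=
      subset_inter (hT.1.trans inter_subset_left) (hT'.1.trans inter_subset_left)
    have := card_le_card hT_sub
    have := card_bNbhdY_inter_le_one E h hne
    omega
  calc ∑ y, (#(bNbhdY E y ∩ A)).choose 2
      = #(univ.biUnion fun y => (bNbhdY E y ∩ A).powersetCard 2) := by
        rw [card_biUnion hdisj]
        simp only [card_powersetCard]
    _ ≤ #(A.powersetCard 2) :=
        card_le_card (biUnion_subset.mpr fun _ _ => powersetCard_mono inter_subset_right)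
    _ = (#A).choose 2 := card_powersetCard 2 A

theorem card_filter_one_lt_card_bNbhdY_le (h : ¬ bContains 2 2 E) :
    #{y | 1 < #(bNbhdY E y)} ≤ m.choose 2 := by
  calc #{y | 1 < #(bNbhdY E y)} = ∑ y with 1 < #(bNbhdY E y), 1 := card_eq_sum_ones _
    _ ≤ ∑ y with 1 < #(bNbhdY E y), (#(bNbhdY E y ∩ univ)).choose 2 :=
        sum_le_sum fun y hy => by
          rw [inter_univ]
          exact Nat.choose_pos (mem_filter.mp hy).2
    _ ≤ ∑ y, (#(bNbhdY E y ∩ univ)).choose 2 := sum_le_sum_of_subset (filter_subset _ _)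
    _ ≤ (#(univ : Finset (Fin m))).choose 2 := sum_choose_two_card_bNbhdY_inter_le E h univ
    _ = m.choose 2 := by rw [card_univ, Fintype.card_fin]

theorem card_filter_bNbhdY_subset_lt {s t : ℕ} (h : ¬ bContains s t (bCompl E))
    (P : Finset (Fin m)) (hP : s + #P ≤ m) : #{y | bNbhdY E y ⊆ P} < t := by
  by_contra! hc
  obtain ⟨B, hB, hBcard⟩ := exists_subset_card_eq hc
  obtain ⟨A, hA, hAcard⟩ := exists_subset_card_eq (s := Pᶜ) (n := s) <| by
    rw [card_compl, Fintype.card_fin]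
    omega
  refine h ⟨A, B, hAcard, hBcard, fun x hx y hy => ?_⟩
  simp only [bCompl, mem_sdiff, mem_univ, true_and]
  intro hxy
  exact mem_compl.mp (hA hx) ((mem_filter.mp (hB hy)).2 (by simp [bNbhdY, hxy]))

theorem card_filter_card_bNbhdY_le_one_le [NeZero m] (h : ∀ i, #{y | bNbhdY E y ⊆ {i}} ≤ 1) :
    #{y | #(bNbhdY E y) ≤ 1} ≤ m := by
  calc #{y | #(bNbhdY E y) ≤ 1}
      ≤ #(univ.biUnion fun i => ({y | bNbhdY E y ⊆ {i}} : Finset (Fin n))) :=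
        card_le_card fun y hy => by
          obtain ⟨i, hi⟩ := card_le_one_iff_subset_singleton.mp (mem_filter.mp hy).2
          exact mem_biUnion.mpr ⟨i, mem_univ _, mem_filter.mpr ⟨mem_univ _, hi⟩⟩
    _ ≤ ∑ i, #{y | bNbhdY E y ⊆ {i}} := card_biUnion_le
    _ ≤ ∑ _i : Fin m, 1 := sum_le_sum fun i _ => h i
    _ = m := by simp

end

theorem add_five_mul_card_filter_bNbhdY_subset_singleton_le {n : ℕ} (E : Finset (Fin 7 × Fin n))
    (hK22 : ¬ bContains 2 2 E) (hK55 : ¬ bContains 5 5 (bCompl E)) (i : Fin 7) :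
    n + 5 * #{y | bNbhdY E y ⊆ {i}} ≤ 39 := by
  have hcompl : #({i}ᶜ : Finset (Fin 7)) = 6 := by
    rw [card_compl, card_singleton, Fintype.card_fin]
  have hpairs : ∑ j ∈ {i}ᶜ, #{y | bNbhdY E y ⊆ {i, j}} ≤ 24 :=
    calc ∑ j ∈ {i}ᶜ, #{y | bNbhdY E y ⊆ {i, j}}
        ≤ ∑ _j ∈ ({i}ᶜ : Finset (Fin 7)), 4 := sum_le_sum fun j _ => by
          have := card_le_two (a := i) (b := j)
          have := card_filter_bNbhdY_subset_lt E hK55 {i, j} (by omega)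
          omega
      _ = 24 := by rw [sum_const, hcompl, smul_eq_mul]
  have hchoose : ∑ y, (#(bNbhdY E y ∩ {i}ᶜ)).choose 2 ≤ 15 := by
    have := sum_choose_two_card_bNbhdY_inter_le E hK22 {i}ᶜ
    rwa [hcompl] at this
  have hy (y : Fin n) : (if bNbhdY E y ⊆ {i} then 6 else 1) ≤
      #{j ∈ {i}ᶜ | bNbhdY E y ⊆ {i, j}} + (#(bNbhdY E y ∩ {i}ᶜ)).choose 2 := by
    split_ifs with hyi
    · rw [filter_true_of_mem fun j _ => hyi.trans (by simp), hcompl]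
      exact le_add_right le_rfl
    · exact one_le_card_filter_subset_pair_add_choose_two hyi
  have hsplit : #{y | bNbhdY E y ⊆ {i}} + #{y | ¬ bNbhdY E y ⊆ {i}} = n := by
    simpa using card_filter_add_card_filter_not (s := univ) (fun y => bNbhdY E y ⊆ {i})
  calc n + 5 * #{y | bNbhdY E y ⊆ {i}} = ∑ y, (if bNbhdY E y ⊆ {i} then 6 else 1) := by
        rw [sum_ite, sum_const, sum_const, smul_eq_mul, smul_eq_mul]
        omega
    _ ≤ ∑ y, (#{j ∈ {i}ᶜ | bNbhdY E y ⊆ {i, j}} + (#(bNbhdY E y ∩ {i}ᶜ)).choose 2) :=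
        sum_le_sum fun y _ => hy y
    _ = ∑ j ∈ {i}ᶜ, #{y | bNbhdY E y ⊆ {i, j}} +
          ∑ y, (#(bNbhdY E y ∩ {i}ᶜ)).choose 2 := by
        rw [sum_add_distrib]
        congr 1
        exact sum_card_bipartiteAbove_eq_sum_card_bipartiteBelow _
    _ ≤ 39 := by omega

theorem stmt_6 (E : Finset (Fin 7 × Fin 30)) :
    bContains 2 2 E ∨ bContains 5 5 (bCompl E) := by
  by_contra! ⟨hK22, hK55⟩
  have hsmall : #{y | #(bNbhdY E y) ≤ 1} ≤ 7 := card_filter_card_bNbhdY_le_one_le E fun i => by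
    have := add_five_mul_card_filter_bNbhdY_subset_singleton_le E hK22 hK55 i
    omega
  have hlarge : #{y | 1 < #(bNbhdY E y)} ≤ 21 := card_filter_one_lt_card_bNbhdY_le E hK22
  have htotal : #{y | #(bNbhdY E y) ≤ 1} + #{y | 1 < #(bNbhdY E y)} = 30 := by
    simpa using card_filter_add_card_filter_not (s := univ) fun y : Fin 30 => #(bNbhdY E y) ≤ 1
  omega
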